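/- Let k ≥ 4, m ≥ 0 and n ≥ k−1 be integers. Then #{Δ ∈ P_k(m,n) : d_1 = d_{k−1} ≥ 2, α_1 = α_2 = d_1 > α_3, and β = ∅} = #{Δ ∈ P_k(m,n+1) : d_1 ≥ 3, d_i = d_1 − 1 for all 2 ≤ i ≤ k−2, d_{k−1} = d_1 − 2, γ^1 = ⋯ = γ^{k−3} = ∅, γ^{k−2} = (1), α_1 = α_2 = d_{k−1}, and β = ∅}. -/

import Mathlib

/-- A partition: a finite nonincreasing list of positive integers. -/
structure Partn where
  parts : List ℕ
  sorted : parts.Pairwise (· ≥ ·)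
  pos : ∀ x ∈ parts, 0 < x

namespace Partn

/-- The weight `|λ|` of a partition: the sum of its parts. -/
def wt (p : Partn) : ℕ := p.parts.sum

/-- The length `ℓ(λ)`: the number of parts. -/
def len (p : Partn) : ℕ := p.parts.length

/-- The `j`-th largest part `λ_j` (1-indexed), with `λ_j = 0` for `j > ℓ(λ)`. -/
def part (p : Partn) (j : ℕ) : ℕ := p.parts.getD (j - 1) 0

/-- `f_j(λ)`: the number of parts of `λ` equal to `j`. -/
def freq (p : Partn) (j : ℕ) : ℕ := p.parts.count j

/-- The empty partition. -/
def empty : Partn := ⟨[], List.Pairwise.nil, by simp⟩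

end Partn

/-- The type of `(2k-1)`-tuples `(α, β, γ^1, …, γ^{k-2}, ϖ^1, …, ϖ^{k-1})`. -/
abbrev PTuple (k : ℕ) : Type :=
  Partn × Partn × (Fin (k - 2) → Partn) × (Fin (k - 1) → Partn)

/-- `d_j := ℓ(ϖ^j)` (1-indexed, `0` out of range). -/
def dIdx (k : ℕ) (w : Fin (k - 1) → Partn) (j : ℕ) : ℕ :=
  if h : j - 1 < k - 1 then (w ⟨j - 1, h⟩).len else 0

/-- `γ^j` (1-indexed, the empty partition out of range). -/
def gIdx (k : ℕ) (g : Fin (k - 2) → Partn) (j : ℕ) : Partn :=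
  if h : j - 1 < k - 2 then g ⟨j - 1, h⟩ else Partn.empty

/-- Membership in Garvan-type set `P_k(m, n)` of `(2k-1)`-tuples of partitions. -/
def PkMem (k : ℕ) (m : ℤ) (n : ℕ) (t : PTuple k) : Prop :=
  (∀ i : Fin (k - 1), (t.2.2.2 i).parts =
      List.replicate (t.2.2.2 i).len (t.2.2.2 i).len) ∧
  (∀ j, 1 ≤ j → j + 1 ≤ k - 1 → dIdx k t.2.2.2 (j + 1) ≤ dIdx k t.2.2.2 j) ∧
  1 ≤ dIdx k t.2.2.2 (k - 1) ∧
  (∀ x ∈ t.1.parts, x ≤ dIdx k t.2.2.2 (k - 1)) ∧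
  (∀ x ∈ t.2.1.parts, x ≤ dIdx k t.2.2.2 (k - 1)) ∧
  (t.1.len : ℤ) - (t.2.1.len : ℤ) = m ∧
  (∀ j, 1 ≤ j → j ≤ k - 2 →
      (gIdx k t.2.2.1 j).len ≤ dIdx k t.2.2.2 j - dIdx k t.2.2.2 (j + 1)) ∧
  t.1.wt + t.2.1.wt + (∑ i, (t.2.2.1 i).wt) + (∑ i, (t.2.2.2 i).wt) = n

/-!
Both sets are parametrised by the pairs `(d, μ)` with `d ≥ 2`, `μ` a partition into parts `< d`,
`ℓ(μ) = m - 2` and `|μ| + 2d + (k - 1)d² = n`. On the left the conditions force every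
`ϖ^i = (d^d)`, every `γ^i = ∅` and `α = (d, d, μ)`. On the right, with `d := d_1 - 1`, they
force `ϖ^1 = ((d+1)^{d+1})`, `ϖ^{k-1} = ((d-1)^{d-1})`, the other `ϖ^i = (d^d)`,
`γ^{k-2} = (1)` and `α = (d - 1, d - 1, μ)`. The weight goes up by exactly one:
`α` loses `2`, `γ` gains `1` and `(d + 1)² + (d - 1)² = 2d² + 2`.
-/

namespace Partn

theorem ext {p q : Partn} (h : p.parts = q.parts) : p = q := by
  cases p; cases q; cases h; rfl

@[simp] theorem empty_parts : empty.parts = [] := rfl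
@[simp] theorem empty_len : empty.len = 0 := rfl
@[simp] theorem empty_wt : empty.wt = 0 := rfl

theorem eq_empty_of_len_eq_zero {p : Partn} (h : p.len = 0) : p = empty :=
  ext (List.length_eq_zero_iff.mp h)

def one : Partn := ⟨[1], List.pairwise_singleton _ _, by simp⟩

@[simp] theorem one_parts : one.parts = [1] := rfl
@[simp] theorem one_len : one.len = 1 := rfl
@[simp] theorem one_wt : one.wt = 1 := rfl

def square (d : ℕ) : Partn :=
  ⟨List.replicate d d, List.pairwise_replicate_of_refl, fun x hx => by
    obtain ⟨hd, rfl⟩ := List.mem_replicate.mp hx; omega⟩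

@[simp] theorem square_parts (d : ℕ) : (square d).parts = List.replicate d d := rfl
@[simp] theorem square_len (d : ℕ) : (square d).len = d := List.length_replicate
@[simp] theorem square_wt (d : ℕ) : (square d).wt = d ^ 2 := by
  simp [wt, sq]

theorem eq_square_len {p : Partn} (h : p.parts = List.replicate p.len p.len) :
    p = square p.len :=
  ext h

-- Junk value `∅` unless `(d, d, p₁, p₂, …)` is a partition.
def consTwo (d : ℕ) (p : Partn) : Partn :=
  if h : 0 < d ∧ ∀ x ∈ p.parts, x ≤ d then
    ⟨d :: d :: p.parts,
      List.pairwise_cons.mpr ⟨by simpa using h.2, List.pairwise_cons.mpr ⟨h.2, p.sorted⟩⟩,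
      by simpa [h.1] using p.pos⟩
  else empty

section consTwo

variable {d : ℕ} {p : Partn}

theorem consTwo_parts (hd : 0 < d) (hp : ∀ x ∈ p.parts, x ≤ d) :
    (consTwo d p).parts = d :: d :: p.parts := by
  rw [consTwo, dif_pos ⟨hd, hp⟩]

theorem consTwo_len (hd : 0 < d) (hp : ∀ x ∈ p.parts, x ≤ d) :
    (consTwo d p).len = p.len + 2 := by
  simp [len, consTwo_parts hd hp]

theorem consTwo_wt (hd : 0 < d) (hp : ∀ x ∈ p.parts, x ≤ d) :
    (consTwo d p).wt = p.wt + 2 * d := by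
  simp [wt, consTwo_parts hd hp]; ring

theorem consTwo_part_one (hd : 0 < d) (hp : ∀ x ∈ p.parts, x ≤ d) : (consTwo d p).part 1 = d := by
  simp [part, consTwo_parts hd hp]

theorem consTwo_part_two (hd : 0 < d) (hp : ∀ x ∈ p.parts, x ≤ d) : (consTwo d p).part 2 = d := by
  simp [part, consTwo_parts hd hp]

theorem consTwo_part_three (hd : 0 < d) (hp : ∀ x ∈ p.parts, x ≤ d) :
    (consTwo d p).part 3 = p.part 1 := by
  simp [part, consTwo_parts hd hp]

theorem consTwo_injective {d' : ℕ} {p' : Partn} (hd : 0 < d) (hp : ∀ x ∈ p.parts, x ≤ d)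
    (hd' : 0 < d') (hp' : ∀ x ∈ p'.parts, x ≤ d') (h : consTwo d p = consTwo d' p') :
    d = d' ∧ p = p' := by
  have := congrArg parts h
  rw [consTwo_parts hd hp, consTwo_parts hd' hp', List.cons.injEq, List.cons.injEq] at this
  exact ⟨this.1, ext this.2.2⟩

end consTwo

def dropTwo (p : Partn) : Partn :=
  ⟨p.parts.drop 2, p.sorted.drop, fun x hx => p.pos x (List.mem_of_mem_drop hx)⟩

theorem eq_consTwo_dropTwo {p : Partn} {d : ℕ} (hd : 0 < d) (h₁ : p.part 1 = d)
    (h₂ : p.part 2 = d) : p = p.dropTwo.consTwo d := by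
  rcases p with ⟨_ | ⟨a, _ | ⟨b, l⟩⟩, sorted, pos⟩
  · simp [part] at h₂; omega
  · simp [part] at h₂; omega
  simp only [part, Nat.sub_self, Nat.add_one_sub_one, List.getD_cons_zero,
    List.getD_cons_succ] at h₁ h₂
  subst h₁ h₂
  have hl : ∀ x ∈ l, x ≤ b := (List.pairwise_cons.mp (List.pairwise_cons.mp sorted).2).1
  exact ext (consTwo_parts (p := dropTwo ⟨b :: b :: l, sorted, pos⟩) hd hl).symm

theorem le_part_one (p : Partn) : ∀ x ∈ p.parts, x ≤ p.part 1 := by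
  rcases p with ⟨_ | ⟨a, l⟩, sorted, -⟩ <;> intro x hx
  · simp at hx
  · rcases List.mem_cons.mp hx with rfl | hx
    · simp [part]
    · simpa [part] using (List.pairwise_cons.mp sorted).1 x hx

theorem le_part_three_of_mem_dropTwo (p : Partn) : ∀ x ∈ p.dropTwo.parts, x ≤ p.part 3 := by
  have h : p.dropTwo.part 1 = p.part 3 := by
    simp [part, dropTwo, List.getD_eq_getElem?_getD]
  exact h ▸ p.dropTwo.le_part_one

theorem part_lt {p : Partn} {d : ℕ} (hd : 0 < d) (h : ∀ x ∈ p.parts, x < d) (j : ℕ) :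
    p.part j < d := by
  rcases lt_or_ge (j - 1) p.parts.length with hj | hj
  · rw [part, List.getD_eq_getElem _ _ hj]; exact h _ (List.getElem_mem hj)
  · rwa [part, List.getD_eq_default _ _ hj]

end Partn

section Indexing

variable {k : ℕ}

theorem dIdx_of_le (w : Fin (k - 1) → Partn) {j : ℕ} (h₁ : 1 ≤ j) (h₂ : j ≤ k - 1) :
    dIdx k w j = (w ⟨j - 1, by omega⟩).len :=
  dif_pos (by omega)

theorem dIdx_succ (w : Fin (k - 1) → Partn) (i : Fin (k - 1)) : dIdx k w (i + 1) = (w i).len :=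
  dif_pos (by omega)

theorem gIdx_of_le (g : Fin (k - 2) → Partn) {j : ℕ} (h₁ : 1 ≤ j) (h₂ : j ≤ k - 2) :
    gIdx k g j = g ⟨j - 1, by omega⟩ :=
  dif_pos (by omega)

theorem gIdx_succ (g : Fin (k - 2) → Partn) (i : Fin (k - 2)) : gIdx k g (i + 1) = g i :=
  dif_pos (by omega)

theorem antitoneOn_dIdx {w : Fin (k - 1) → Partn}
    (h : ∀ j, 1 ≤ j → j + 1 ≤ k - 1 → dIdx k w (j + 1) ≤ dIdx k w j) :
    AntitoneOn (dIdx k w) (Set.Icc 1 (k - 1)) :=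
  antitoneOn_of_add_one_le Set.ordConnected_Icc fun j _ hj hj' => h j hj.1 hj'.2

theorem eq_square_of_pkMem {m : ℤ} {n : ℕ} {t : PTuple k} (ht : PkMem k m n t)
    (i : Fin (k - 1)) : t.2.2.2 i = .square (dIdx k t.2.2.2 (i + 1)) := by
  rw [dIdx_succ]; exact Partn.eq_square_len (ht.1 i)

end Indexing

open Partn

def flatTuple (k d : ℕ) (μ : Partn) : PTuple k :=
  (μ.consTwo d, empty, fun _ => empty, fun _ => square d)

section flatTuple

variable {k d : ℕ} {μ : Partn}

theorem dIdx_flatTuple {j : ℕ} (h₁ : 1 ≤ j) (h₂ : j ≤ k - 1) :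
    dIdx k (flatTuple k d μ).2.2.2 j = d := by
  simp [dIdx_of_le _ h₁ h₂, flatTuple]

theorem dIdx_flatTuple_last (hk : 2 ≤ k) : dIdx k (flatTuple k d μ).2.2.2 (k - 1) = d :=
  dIdx_flatTuple (by omega) le_rfl

theorem gIdx_flatTuple (j : ℕ) : gIdx k (flatTuple k d μ).2.2.1 j = empty := by
  unfold gIdx; split <;> rfl

theorem sum_wt_flatTuple_squares : ∑ i, ((flatTuple k d μ).2.2.2 i).wt = (k - 1) * d ^ 2 := by
  simp [flatTuple]

theorem sum_wt_flatTuple_gammas : ∑ i, ((flatTuple k d μ).2.2.1 i).wt = 0 := by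
  simp [flatTuple]

theorem pkMem_flatTuple_iff {m : ℤ} {n : ℕ} (hk : 2 ≤ k) (hd : 0 < d)
    (hμ : ∀ x ∈ μ.parts, x ≤ d) :
    PkMem k m n (flatTuple k d μ) ↔
      (μ.len : ℤ) + 2 = m ∧ μ.wt + 2 * d + (k - 1) * d ^ 2 = n := by
  have hα : (flatTuple k d μ).1 = μ.consTwo d := rfl
  have hβ : (flatTuple k d μ).2.1 = empty := rfl
  simp only [PkMem, hα, hβ, dIdx_flatTuple_last hk, consTwo_len hd hμ, consTwo_wt hd hμ,
    consTwo_parts hd hμ, sum_wt_flatTuple_squares, sum_wt_flatTuple_gammas, empty_len, empty_wt,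
    empty_parts, Nat.cast_zero, sub_zero, add_zero]
  push_cast
  constructor
  · rintro ⟨-, -, -, -, -, hlen, -, hn⟩
    exact ⟨hlen, hn⟩
  · rintro ⟨hlen, hn⟩
    refine ⟨fun _ => by simp [flatTuple], fun j h₁ h₂ => ?_, hd, by simpa using hμ, by simp, hlen,
      fun j _ _ => by simp [gIdx_flatTuple], hn⟩
    rw [dIdx_flatTuple h₁ (by omega), dIdx_flatTuple (by omega) h₂]

end flatTuple

-- `stepShape k d (i - 1) = d_i` for the tuple `stepTuple k d μ` below.
def stepShape (k d i : ℕ) : ℕ := if i = 0 then d + 1 else if i = k - 2 then d - 1 else d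

def stepTuple (k d : ℕ) (μ : Partn) : PTuple k :=
  (μ.consTwo (d - 1), empty, fun i => if i.val = k - 3 then one else empty,
    fun i => square (stepShape k d i))

section stepTuple

variable {k d : ℕ} {μ : Partn}

theorem dIdx_stepTuple {j : ℕ} (h₁ : 1 ≤ j) (h₂ : j ≤ k - 1) :
    dIdx k (stepTuple k d μ).2.2.2 j = stepShape k d (j - 1) := by
  simp [dIdx_of_le _ h₁ h₂, stepTuple]

theorem dIdx_stepTuple_last (hk : 3 ≤ k) : dIdx k (stepTuple k d μ).2.2.2 (k - 1) = d - 1 := by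
  rw [dIdx_stepTuple (by omega) le_rfl, stepShape, if_neg (by omega), if_pos (by omega)]

theorem gIdx_stepTuple {j : ℕ} (h₁ : 1 ≤ j) (h₂ : j ≤ k - 2) :
    gIdx k (stepTuple k d μ).2.2.1 j = if j = k - 2 then one else empty := by
  simp only [gIdx_of_le _ h₁ h₂, stepTuple]
  exact if_congr (by omega) rfl rfl

theorem sum_wt_stepTuple_squares (hk : 3 ≤ k) :
    ∑ i, ((stepTuple k d μ).2.2.2 i).wt = (d + 1) ^ 2 + (k - 3) * d ^ 2 + (d - 1) ^ 2 := by
  obtain ⟨c, rfl⟩ := Nat.exists_eq_add_of_le' hk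
  simp only [stepTuple, square_wt]
  rw [Fin.sum_univ_eq_sum_range (fun i => stepShape (c + 3) d i ^ 2),
    show c + 3 - 1 = c + 1 + 1 by omega, Finset.sum_range_succ, Finset.sum_range_succ']
  have hmid : ∀ i ∈ Finset.range c, stepShape (c + 3) d (i + 1) ^ 2 = d ^ 2 := fun i hi => by
    rw [Finset.mem_range] at hi
    rw [stepShape, if_neg (by omega), if_neg (by omega)]
  rw [Finset.sum_congr rfl hmid, Finset.sum_const, Finset.card_range, smul_eq_mul, stepShape,
    if_pos rfl, stepShape, if_neg (by omega), if_pos (by omega), Nat.add_sub_cancel]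
  ring

theorem sum_wt_stepTuple_gammas (hk : 3 ≤ k) : ∑ i, ((stepTuple k d μ).2.2.1 i).wt = 1 := by
  simp only [stepTuple, apply_ite wt, one_wt, empty_wt]
  have hlt : k - 3 < k - 2 := by omega
  have hval (i : Fin (k - 2)) : (i : ℕ) = k - 3 ↔ i = ⟨k - 3, hlt⟩ := by rw [Fin.ext_iff]
  simp only [hval, Finset.sum_ite_eq', Finset.mem_univ, if_true]

theorem pkMem_stepTuple_iff {m : ℤ} {n : ℕ} (hk : 3 ≤ k) (hd : 2 ≤ d)
    (hμ : ∀ x ∈ μ.parts, x < d) :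
    PkMem k m (n + 1) (stepTuple k d μ) ↔
      (μ.len : ℤ) + 2 = m ∧ μ.wt + 2 * d + (k - 1) * d ^ 2 = n := by
  have hμ' : ∀ x ∈ μ.parts, x ≤ d - 1 := fun x hx => by have := hμ x hx; omega
  have hd' : 0 < d - 1 := by omega
  have hα : (stepTuple k d μ).1 = μ.consTwo (d - 1) := rfl
  have hβ : (stepTuple k d μ).2.1 = empty := rfl
  have hwt : 2 * (d - 1) + 1 + ((d + 1) ^ 2 + (k - 3) * d ^ 2 + (d - 1) ^ 2) =
      2 * d + (k - 1) * d ^ 2 + 1 := by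
    obtain ⟨c, rfl⟩ := Nat.exists_eq_add_of_le' hk
    obtain ⟨e, rfl⟩ := Nat.exists_eq_add_of_le' (by omega : 1 ≤ d)
    rw [show c + 3 - 3 = c by omega, show c + 3 - 1 = c + 2 by omega, Nat.add_sub_cancel]
    ring
  simp only [PkMem, hα, hβ, dIdx_stepTuple_last hk, consTwo_len hd' hμ', consTwo_wt hd' hμ',
    consTwo_parts hd' hμ', sum_wt_stepTuple_squares hk, sum_wt_stepTuple_gammas hk, empty_len,
    empty_wt, empty_parts, Nat.cast_zero, sub_zero]
  push_cast
  constructor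
  · rintro ⟨-, -, -, -, -, hlen, -, hn⟩
    exact ⟨hlen, by omega⟩
  · rintro ⟨hlen, hn⟩
    refine ⟨fun _ => by simp [stepTuple], fun j h₁ h₂ => ?_, hd', by simpa using hμ', by simp,
      hlen, fun j h₁ h₂ => ?_, by omega⟩
    · rw [dIdx_stepTuple h₁ (by omega), dIdx_stepTuple (by omega) h₂, stepShape, stepShape]
      split_ifs <;> omega
    · rw [gIdx_stepTuple h₁ h₂, dIdx_stepTuple h₁ (by omega), dIdx_stepTuple (by omega) (by omega),
        stepShape, stepShape]
      split_ifs <;> simp <;> omega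

end stepTuple

section Extraction

variable {k : ℕ} {m : ℤ} {n : ℕ}

theorem eq_flatTuple {t : PTuple k} (ht : PkMem k m n t)
    (hflat : dIdx k t.2.2.2 1 = dIdx k t.2.2.2 (k - 1)) (hd : 0 < dIdx k t.2.2.2 1)
    (h₁ : t.1.part 1 = dIdx k t.2.2.2 1) (h₂ : t.1.part 2 = dIdx k t.2.2.2 1)
    (hβ : t.2.1.parts = []) :
    t = flatTuple k (dIdx k t.2.2.2 1) t.1.dropTwo := by
  set d := dIdx k t.2.2.2 1
  have hconst : ∀ j, 1 ≤ j → j ≤ k - 1 → dIdx k t.2.2.2 j = d := fun j hj₁ hj₂ => by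
    have hanti := antitoneOn_dIdx ht.2.1
    have := hanti ⟨le_rfl, by omega⟩ ⟨hj₁, hj₂⟩ hj₁
    have := hanti ⟨hj₁, hj₂⟩ ⟨by omega, le_rfl⟩ hj₂
    omega
  have hγ (i : Fin (k - 2)) : t.2.2.1 i = empty := by
    have := ht.2.2.2.2.2.2.1 (i + 1) (by omega) (by omega)
    rw [gIdx_succ, hconst (i + 1) (by omega) (by omega), hconst (i + 1 + 1) (by omega) (by omega),
      Nat.sub_self, Nat.le_zero] at this
    exact eq_empty_of_len_eq_zero this
  have hw (i : Fin (k - 1)) : t.2.2.2 i = square d := by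
    rw [eq_square_of_pkMem ht i, hconst (i + 1) (by omega) (by omega)]
  exact Prod.ext (eq_consTwo_dropTwo hd h₁ h₂)
    (Prod.ext (Partn.ext hβ) (Prod.ext (funext hγ) (funext hw)))

theorem eq_stepTuple {t : PTuple k} (hk : 3 ≤ k) (ht : PkMem k m n t) (hd : 3 ≤ dIdx k t.2.2.2 1)
    (hmid : ∀ j, 2 ≤ j → j ≤ k - 2 → dIdx k t.2.2.2 j = dIdx k t.2.2.2 1 - 1)
    (hlast : dIdx k t.2.2.2 (k - 1) = dIdx k t.2.2.2 1 - 2)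
    (hγ : ∀ j, 1 ≤ j → j ≤ k - 3 → (gIdx k t.2.2.1 j).parts = [])
    (hγlast : (gIdx k t.2.2.1 (k - 2)).parts = [1])
    (h₁ : t.1.part 1 = dIdx k t.2.2.2 (k - 1)) (h₂ : t.1.part 2 = dIdx k t.2.2.2 (k - 1))
    (hβ : t.2.1.parts = []) :
    t = stepTuple k (dIdx k t.2.2.2 1 - 1) t.1.dropTwo := by
  set d := dIdx k t.2.2.2 1 - 1
  have hshape : ∀ j, 1 ≤ j → j ≤ k - 1 → dIdx k t.2.2.2 j = stepShape k d (j - 1) := by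
    intro j hj₁ hj₂
    rcases (show j = 1 ∨ j = k - 1 ∨ (2 ≤ j ∧ j ≤ k - 2) by omega) with rfl | rfl | hj
    · rw [stepShape, if_pos rfl]; omega
    · rw [hlast, stepShape, if_neg (by omega), if_pos (by omega)]; omega
    · rw [hmid j hj.1 hj.2, stepShape, if_neg (by omega), if_neg (by omega)]
  have hw (i : Fin (k - 1)) : t.2.2.2 i = square (stepShape k d i) := by
    rw [eq_square_of_pkMem ht i, hshape (i + 1) (by omega) (by omega), Nat.add_sub_cancel]
  have hγ' (i : Fin (k - 2)) : t.2.2.1 i = if i.val = k - 3 then one else empty := by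
    rw [← gIdx_succ t.2.2.1 i]
    split_ifs with hi
    · exact Partn.ext (by rw [show (i : ℕ) + 1 = k - 2 by omega, hγlast, one_parts])
    · exact Partn.ext (hγ (i + 1) (by omega) (by omega))
  have hα₁ : t.1.part 1 = d - 1 := by rw [h₁, hlast]; omega
  have hα₂ : t.1.part 2 = d - 1 := by rw [h₂, hlast]; omega
  exact Prod.ext (eq_consTwo_dropTwo (by omega) hα₁ hα₂)
    (Prod.ext (Partn.ext hβ) (Prod.ext (funext hγ') (funext hw)))

end Extraction

def params (k : ℕ) (m : ℤ) (n : ℕ) : Set (ℕ × Partn) :=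
  {p | 2 ≤ p.1 ∧ (∀ x ∈ p.2.parts, x < p.1) ∧ (p.2.len : ℤ) + 2 = m ∧
    p.2.wt + 2 * p.1 + (k - 1) * p.1 ^ 2 = n}

section Parametrisation

variable {k : ℕ} {m : ℤ} {n : ℕ}

theorem image_flatTuple_params (hk : 2 ≤ k) :
    (fun p : ℕ × Partn => flatTuple k p.1 p.2) '' params k m n =
      {t : PTuple k | PkMem k m n t ∧
        dIdx k t.2.2.2 1 = dIdx k t.2.2.2 (k - 1) ∧ 2 ≤ dIdx k t.2.2.2 1 ∧
        t.1.part 1 = dIdx k t.2.2.2 1 ∧ t.1.part 2 = dIdx k t.2.2.2 1 ∧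
        t.1.part 3 < dIdx k t.2.2.2 1 ∧ t.2.1.parts = []} := by
  ext t
  constructor
  · rintro ⟨⟨d, μ⟩, ⟨hd, hμ, hlen, hwt⟩, rfl⟩
    dsimp only at hd hμ hlen hwt ⊢
    have hμ' : ∀ x ∈ μ.parts, x ≤ d := fun x hx => (hμ x hx).le
    have hd₀ : 0 < d := by omega
    refine ⟨(pkMem_flatTuple_iff hk hd₀ hμ').2 ⟨hlen, hwt⟩, ?_⟩
    have hd₁ : dIdx k (flatTuple k d μ).2.2.2 1 = d := dIdx_flatTuple le_rfl (by omega)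
    rw [hd₁, dIdx_flatTuple_last hk]
    exact ⟨rfl, hd, consTwo_part_one hd₀ hμ', consTwo_part_two hd₀ hμ',
      (consTwo_part_three hd₀ hμ').trans_lt (part_lt hd₀ hμ 1), rfl⟩
  · rintro ⟨ht, hflat, hd, h₁, h₂, h₃, hβ⟩
    have hμ : ∀ x ∈ t.1.dropTwo.parts, x < dIdx k t.2.2.2 1 := fun x hx =>
      (t.1.le_part_three_of_mem_dropTwo x hx).trans_lt h₃
    have heq := eq_flatTuple ht hflat (by omega) h₁ h₂ hβ
    rw [heq] at ht
    exact ⟨(_, _), ⟨hd, hμ, (pkMem_flatTuple_iff hk (by omega) fun x hx => (hμ x hx).le).1 ht⟩,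
      heq.symm⟩

theorem image_stepTuple_params (hk : 3 ≤ k) :
    (fun p : ℕ × Partn => stepTuple k p.1 p.2) '' params k m n =
      {t : PTuple k | PkMem k m (n + 1) t ∧ 3 ≤ dIdx k t.2.2.2 1 ∧
        (∀ j, 2 ≤ j → j ≤ k - 2 → dIdx k t.2.2.2 j = dIdx k t.2.2.2 1 - 1) ∧
        dIdx k t.2.2.2 (k - 1) = dIdx k t.2.2.2 1 - 2 ∧
        (∀ j, 1 ≤ j → j ≤ k - 3 → (gIdx k t.2.2.1 j).parts = []) ∧
        (gIdx k t.2.2.1 (k - 2)).parts = [1] ∧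
        t.1.part 1 = dIdx k t.2.2.2 (k - 1) ∧
        t.1.part 2 = dIdx k t.2.2.2 (k - 1) ∧ t.2.1.parts = []} := by
  ext t
  constructor
  · rintro ⟨⟨d, μ⟩, ⟨hd, hμ, hlen, hwt⟩, rfl⟩
    dsimp only at hd hμ hlen hwt ⊢
    have hd' : 0 < d - 1 := by omega
    have hμ' : ∀ x ∈ μ.parts, x ≤ d - 1 := fun x hx => Nat.le_sub_one_of_lt (hμ x hx)
    have hd₁ : dIdx k (stepTuple k d μ).2.2.2 1 = d + 1 := by
      rw [dIdx_stepTuple le_rfl (by omega), stepShape, if_pos rfl]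
    refine ⟨(pkMem_stepTuple_iff hk hd hμ).2 ⟨hlen, hwt⟩, ?_⟩
    rw [hd₁, dIdx_stepTuple_last hk]
    refine ⟨by omega, fun j h₁ h₂ => ?_, by omega, fun j h₁ h₂ => ?_, ?_,
      consTwo_part_one hd' hμ', consTwo_part_two hd' hμ', rfl⟩
    · rw [dIdx_stepTuple (by omega) (by omega), stepShape, if_neg (by omega), if_neg (by omega)]
      rfl
    · rw [gIdx_stepTuple h₁ (by omega), if_neg (by omega), empty_parts]
    · rw [gIdx_stepTuple (by omega) le_rfl, if_pos rfl, one_parts]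
  · rintro ⟨ht, hd, hmid, hlast, hγ, hγlast, h₁, h₂, hβ⟩
    have heq := eq_stepTuple hk ht hd hmid hlast hγ hγlast h₁ h₂ hβ
    have hμ : ∀ x ∈ t.1.dropTwo.parts, x < dIdx k t.2.2.2 1 - 1 := fun x hx => by
      have := ht.2.2.2.1 x (List.mem_of_mem_drop hx)
      omega
    rw [heq] at ht
    exact ⟨(_, _), ⟨by omega, hμ, (pkMem_stepTuple_iff hk (by omega) hμ).1 ht⟩, heq.symm⟩

theorem injOn_flatTuple : Set.InjOn (fun p : ℕ × Partn => flatTuple k p.1 p.2) (params k m n) := by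
  rintro ⟨d, μ⟩ ⟨hd, hμ, -⟩ ⟨d', μ'⟩ ⟨hd', hμ', -⟩ h
  obtain ⟨rfl, rfl⟩ := consTwo_injective (by omega) (fun x hx => (hμ x hx).le) (by omega)
    (fun x hx => (hμ' x hx).le) (congrArg Prod.fst h)
  rfl

theorem injOn_stepTuple : Set.InjOn (fun p : ℕ × Partn => stepTuple k p.1 p.2) (params k m n) := by
  rintro ⟨d, μ⟩ ⟨hd, hμ, -⟩ ⟨d', μ'⟩ ⟨hd', hμ', -⟩ h
  obtain ⟨hdd, rfl⟩ := consTwo_injective (by omega) (fun x hx => Nat.le_sub_one_of_lt (hμ x hx))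
    (by omega) (fun x hx => Nat.le_sub_one_of_lt (hμ' x hx)) (congrArg Prod.fst h)
  obtain rfl : d = d' := by omega
  rfl

end Parametrisation

theorem lem_pp13_general (k : ℕ) (m : ℤ) (n : ℕ) (hk : 4 ≤ k) :
    {t : PTuple k | PkMem k m n t ∧
        dIdx k t.2.2.2 1 = dIdx k t.2.2.2 (k - 1) ∧ 2 ≤ dIdx k t.2.2.2 1 ∧
        t.1.part 1 = dIdx k t.2.2.2 1 ∧ t.1.part 2 = dIdx k t.2.2.2 1 ∧
        t.1.part 3 < dIdx k t.2.2.2 1 ∧ t.2.1.parts = []}.ncard =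
      {t : PTuple k | PkMem k m (n + 1) t ∧ 3 ≤ dIdx k t.2.2.2 1 ∧
        (∀ j, 2 ≤ j → j ≤ k - 2 → dIdx k t.2.2.2 j = dIdx k t.2.2.2 1 - 1) ∧
        dIdx k t.2.2.2 (k - 1) = dIdx k t.2.2.2 1 - 2 ∧
        (∀ j, 1 ≤ j → j ≤ k - 3 → (gIdx k t.2.2.1 j).parts = []) ∧
        (gIdx k t.2.2.1 (k - 2)).parts = [1] ∧
        t.1.part 1 = dIdx k t.2.2.2 (k - 1) ∧
        t.1.part 2 = dIdx k t.2.2.2 (k - 1) ∧ t.2.1.parts = []}.ncard := by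
  rw [← image_flatTuple_params (by omega), ← image_stepTuple_params (by omega),
    injOn_flatTuple.ncard_image, injOn_stepTuple.ncard_image]

/-- Lemma 5.15 (restated), case `k ≥ 4`. -/
theorem lem_pp13 (k : ℕ) (m : ℤ) (n : ℕ) (hk : 4 ≤ k) (hm : 0 ≤ m)
    (hn : k - 1 ≤ n) :
    {t : PTuple k | PkMem k m n t ∧
        dIdx k t.2.2.2 1 = dIdx k t.2.2.2 (k - 1) ∧ 2 ≤ dIdx k t.2.2.2 1 ∧
        t.1.part 1 = dIdx k t.2.2.2 1 ∧ t.1.part 2 = dIdx k t.2.2.2 1 ∧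
        t.1.part 3 < dIdx k t.2.2.2 1 ∧ t.2.1.parts = []}.ncard =
      {t : PTuple k | PkMem k m (n + 1) t ∧ 3 ≤ dIdx k t.2.2.2 1 ∧
        (∀ j, 2 ≤ j → j ≤ k - 2 → dIdx k t.2.2.2 j = dIdx k t.2.2.2 1 - 1) ∧
        dIdx k t.2.2.2 (k - 1) = dIdx k t.2.2.2 1 - 2 ∧
        (∀ j, 1 ≤ j → j ≤ k - 3 → (gIdx k t.2.2.1 j).parts = []) ∧
        (gIdx k t.2.2.1 (k - 2)).parts = [1] ∧
        t.1.part 1 = dIdx k t.2.2.2 (k - 1) ∧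
        t.1.part 2 = dIdx k t.2.2.2 (k - 1) ∧ t.2.1.parts = []}.ncard :=
  lem_pp13_general k m n hk
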